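/- There is an absolute constant C > 0 such that for every r > 0, the weak L^{4/3} norm in time of S_B satisfies sup_{λ>0} λ · |{ t > 0 : S_B(r,t) > λ }|^{3/4} ≤ C r^{−3/4}, where |·| denotes one-dimensional Lebesgue measure. -/

import Mathlib

/-- The Bessel function of the first kind of integer order `n`, defined via the
integral representation `J_n(x) = (1/(2π)) ∫_{-π}^{π} e^{i(n s + x sin s)} ds`. -/
noncomputable def besselJ (n : ℤ) (x : ℝ) : ℝ :=
  (1 / (2 * Real.pi)) *
    (∫ s in (-Real.pi)..Real.pi,
      Complex.exp (Complex.I * ((n : ℂ) * (s : ℂ) + (x : ℂ) * (Real.sin s : ℂ)))).re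

/-- The Bessel part of the free Klein–Gordon sine propagator kernel in `ℝ³`:
`S_B(r,t) = (1/(4π)) 𝟙_{t ≥ r} J_1(√(t² − r²))/√(t² − r²)`, with the value at `t = r`
given by the limit `J_1(z)/z → 1/2`, i.e. `S_B(r,r) = 1/(8π)`. -/
noncomputable def SB (r t : ℝ) : ℝ :=
  (1 / (4 * Real.pi)) *
    (if r ≤ t then
      (if t = r then 1 / 2
       else besselJ 1 (Real.sqrt (t ^ 2 - r ^ 2)) / Real.sqrt (t ^ 2 - r ^ 2))
     else 0)

/-!
By the odd symmetry of its phase, `J₁(x) = π⁻¹ Re ∫₀^π exp (i (s + x sin s)) ds`. The phase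
derivative `1 + x cos s` vanishes only near `π/2`; cutting out a window of width `2π/√x` there and
applying van der Corput's first-derivative estimate (`|∫ e^{iφ}| ≤ 3 / min |φ'|` for monotone `φ'`)
on the two remaining pieces gives `|J₁(x)| ≤ 4/√x`. Hence `S_B(r,t) ≤ (t² - r²)^(-3/4)`, so
`S_B(r,t) > λ` forces `r ≤ t` and `2r (t - r) ≤ t² - r² < λ^(-4/3)`: the superlevel set lies in an
interval of length `λ^(-4/3) / (2r)`, and `λ (λ^(-4/3) / (2r))^(3/4) ≤ r^(-3/4)`.
-/

open Complex MeasureTheory Set intervalIntegral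
open scoped ComplexConjugate

theorem integral_exp_neg_mul_I (φ : ℝ → ℝ) (a b : ℝ) :
    ∫ s in a..b, exp (↑(-φ s) * I) = conj (∫ s in a..b, exp (↑(φ s) * I)) := by
  rw [← intervalIntegral_conj]
  congr 1 with s
  rw [← exp_conj, map_mul, conj_ofReal, conj_I, ofReal_neg, neg_mul, mul_neg]

theorem integral_abs_eq_abs_sub_of_hasDerivAt {w w' : ℝ → ℝ} {a b : ℝ} (hab : a ≤ b)
    (hw : ∀ s ∈ Icc a b, HasDerivAt w (w' s) s) (hw' : ContinuousOn w' (Icc a b))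
    (hsign : (∀ s ∈ Icc a b, 0 ≤ w' s) ∨ ∀ s ∈ Icc a b, w' s ≤ 0) :
    ∫ s in a..b, |w' s| = |w b - w a| := by
  have hint : IntervalIntegrable w' volume a b := hw'.intervalIntegrable_of_Icc hab
  have hFTC : ∫ s in a..b, w' s = w b - w a :=
    integral_eq_sub_of_hasDerivAt (by rwa [uIcc_of_le hab]) hint
  rcases hsign with hpos | hneg
  · have hcongr : EqOn (fun s => |w' s|) w' (uIcc a b) := fun s hs =>
      abs_of_nonneg (hpos s (by rwa [uIcc_of_le hab] at hs))
    rw [integral_congr hcongr, hFTC, abs_of_nonneg (hFTC ▸ integral_nonneg hab hpos)]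
  · have hcongr : EqOn (fun s => |w' s|) (fun s => -w' s) (uIcc a b) := fun s hs =>
      abs_of_nonpos (hneg s (by rwa [uIcc_of_le hab] at hs))
    have hnonneg : 0 ≤ ∫ s in a..b, -w' s :=
      integral_nonneg hab fun s hs => neg_nonneg.2 (hneg s hs)
    rw [intervalIntegral.integral_neg, hFTC] at hnonneg
    rw [integral_congr hcongr, intervalIntegral.integral_neg, hFTC, abs_of_nonpos (by linarith)]

theorem integral_exp_mul_I_eq_of_deriv_ne_zero {φ φ' φ'' : ℝ → ℝ} {a b : ℝ} (hab : a ≤ b)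
    (hφ : ∀ s ∈ Icc a b, HasDerivAt φ (φ' s) s) (hφ' : ∀ s ∈ Icc a b, HasDerivAt φ' (φ'' s) s)
    (hφ'' : ContinuousOn φ'' (Icc a b)) (hne : ∀ s ∈ Icc a b, φ' s ≠ 0) :
    ∫ s in a..b, exp (φ s * I) =
      -I * ↑(φ' b)⁻¹ * exp (φ b * I) - -I * ↑(φ' a)⁻¹ * exp (φ a * I) -
        ∫ s in a..b, -I * ↑(-φ'' s / φ' s ^ 2) * exp (φ s * I) := by
  have huIcc : uIcc a b = Icc a b := uIcc_of_le hab
  have hφ'_cont : ContinuousOn φ' (Icc a b) :=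
    continuousOn_of_forall_continuousAt fun s hs => (hφ' s hs).continuousAt
  have hw'_cont : ContinuousOn (fun s => -φ'' s / φ' s ^ 2) (Icc a b) :=
    hφ''.neg.div (hφ'_cont.pow 2) fun s hs => pow_ne_zero 2 (hne s hs)
  have hv : ∀ s ∈ Icc a b, HasDerivAt (fun s => exp (φ s * I)) (exp (φ s * I) * (φ' s * I)) s :=
    fun s hs => ((hφ s hs).ofReal_comp.mul_const I).cexp
  have hv'_cont : ContinuousOn (fun s => exp (φ s * I) * (φ' s * I)) (Icc a b) :=
    (continuousOn_of_forall_continuousAt fun s hs => (hv s hs).continuousAt).mul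
      ((continuous_ofReal.comp_continuousOn hφ'_cont).mul continuousOn_const)
  -- integrate `exp (φ I) = u · v'` by parts, with `u = -I / φ'` and `v = exp (φ I)`
  rw [← integral_mul_deriv_eq_deriv_mul (u := fun s => -I * ↑(φ' s)⁻¹)
    (v := fun s => exp (φ s * I))
    (fun s hs => ((hφ' s (huIcc ▸ hs)).inv (hne s (huIcc ▸ hs))).ofReal_comp.const_mul (-I))
    (fun s hs => hv s (huIcc ▸ hs))
    (((continuous_ofReal.comp_continuousOn hw'_cont).const_smul (-I)).intervalIntegrable_of_Icc
      hab)
    (hv'_cont.intervalIntegrable_of_Icc hab)]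
  refine integral_congr fun s hs => ?_
  have hφ'_ne : (φ' s : ℂ) ≠ 0 := ofReal_ne_zero.2 (hne s (huIcc ▸ hs))
  simp only [ofReal_inv]
  field_simp
  rw [I_sq, neg_neg]

theorem norm_integral_exp_mul_I_le_of_le_deriv {φ φ' φ'' : ℝ → ℝ} {a b m : ℝ} (hab : a ≤ b)
    (hm : 0 < m) (hφ : ∀ s ∈ Icc a b, HasDerivAt φ (φ' s) s)
    (hφ' : ∀ s ∈ Icc a b, HasDerivAt φ' (φ'' s) s) (hφ'' : ContinuousOn φ'' (Icc a b))
    (hsign : (∀ s ∈ Icc a b, 0 ≤ φ'' s) ∨ ∀ s ∈ Icc a b, φ'' s ≤ 0)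
    (hlow : ∀ s ∈ Icc a b, m ≤ φ' s) :
    ‖∫ s in a..b, exp (φ s * I)‖ ≤ 3 / m := by
  have hpos : ∀ s ∈ Icc a b, 0 < φ' s := fun s hs => hm.trans_le (hlow s hs)
  have hinv_le : ∀ s ∈ Icc a b, (φ' s)⁻¹ ≤ 1 / m := fun s hs =>
    (one_div m).symm ▸ inv_anti₀ hm (hlow s hs)
  have hboundary : ∀ s ∈ Icc a b, ‖-I * ↑(φ' s)⁻¹ * exp (φ s * I)‖ ≤ 1 / m := fun s hs => by
    simpa [norm_exp_ofReal_mul_I, abs_of_pos (hpos s hs)] using hinv_le s hs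
  have hvariation : ∫ s in a..b, ‖-I * ↑(-φ'' s / φ' s ^ 2) * exp (φ s * I)‖ ≤ 1 / m := by
    have hsign' :
        (∀ s ∈ Icc a b, 0 ≤ -φ'' s / φ' s ^ 2) ∨ ∀ s ∈ Icc a b, -φ'' s / φ' s ^ 2 ≤ 0 :=
      hsign.symm.imp (fun h s hs => div_nonneg (neg_nonneg.2 (h s hs)) (sq_nonneg _))
        (fun h s hs => div_nonpos_of_nonpos_of_nonneg (neg_nonpos.2 (h s hs)) (sq_nonneg _))
    -- `1 / φ'` is monotone with values in `(0, 1/m]`, so its total variation is at most `1/m`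
    have hwa : 0 < (φ' a)⁻¹ := inv_pos.2 (hpos a ⟨le_rfl, hab⟩)
    have hwb : 0 < (φ' b)⁻¹ := inv_pos.2 (hpos b ⟨hab, le_rfl⟩)
    simp only [norm_mul, norm_neg, norm_I, norm_real, Real.norm_eq_abs, norm_exp_ofReal_mul_I,
      one_mul, mul_one]
    rw [integral_abs_eq_abs_sub_of_hasDerivAt (w := fun s => (φ' s)⁻¹) hab
      (fun s hs => (hφ' s hs).inv (hpos s hs).ne')
      (hφ''.neg.div ((continuousOn_of_forall_continuousAt fun s hs =>
        (hφ' s hs).continuousAt).pow 2) fun s hs => pow_ne_zero 2 (hpos s hs).ne') hsign',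
      abs_sub_le_iff]
    constructor <;> linarith [hinv_le a ⟨le_rfl, hab⟩, hinv_le b ⟨hab, le_rfl⟩]
  rw [integral_exp_mul_I_eq_of_deriv_ne_zero hab hφ hφ' hφ'' fun s hs => (hpos s hs).ne']
  calc ‖-I * ↑(φ' b)⁻¹ * exp (φ b * I) - -I * ↑(φ' a)⁻¹ * exp (φ a * I) -
        ∫ s in a..b, -I * ↑(-φ'' s / φ' s ^ 2) * exp (φ s * I)‖
      ≤ ‖-I * ↑(φ' b)⁻¹ * exp (φ b * I)‖ + ‖-I * ↑(φ' a)⁻¹ * exp (φ a * I)‖ +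
        ∫ s in a..b, ‖-I * ↑(-φ'' s / φ' s ^ 2) * exp (φ s * I)‖ := by
        refine (norm_sub_le _ _).trans ?_
        gcongr
        exacts [norm_sub_le _ _, intervalIntegral.norm_integral_le_integral_norm hab]
    _ ≤ 1 / m + 1 / m + 1 / m := by
        gcongr
        exacts [hboundary b ⟨hab, le_rfl⟩, hboundary a ⟨le_rfl, hab⟩]
    _ = 3 / m := by ring

theorem norm_integral_exp_mul_I_le_of_deriv_le_neg {φ φ' φ'' : ℝ → ℝ} {a b m : ℝ} (hab : a ≤ b)
    (hm : 0 < m) (hφ : ∀ s ∈ Icc a b, HasDerivAt φ (φ' s) s)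
    (hφ' : ∀ s ∈ Icc a b, HasDerivAt φ' (φ'' s) s) (hφ'' : ContinuousOn φ'' (Icc a b))
    (hsign : (∀ s ∈ Icc a b, 0 ≤ φ'' s) ∨ ∀ s ∈ Icc a b, φ'' s ≤ 0)
    (hup : ∀ s ∈ Icc a b, φ' s ≤ -m) :
    ‖∫ s in a..b, exp (φ s * I)‖ ≤ 3 / m := by
  have h := norm_integral_exp_mul_I_le_of_le_deriv (φ := -φ) (φ' := -φ') (φ'' := -φ'') hab hm
    (fun s hs => (hφ s hs).neg) (fun s hs => (hφ' s hs).neg) hφ''.neg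
    (hsign.symm.imp (fun h s hs => neg_nonneg.2 (h s hs)) fun h s hs => neg_nonpos.2 (h s hs))
    (fun s hs => le_neg.2 (hup s hs))
  rwa [Pi.neg_def, integral_exp_neg_mul_I, RCLike.norm_conj] at h

theorem integral_exp_mul_I_eq_two_mul_re_of_odd {φ : ℝ → ℝ} (hφ : Continuous φ)
    (hodd : ∀ s, φ (-s) = -φ s) (a : ℝ) :
    ∫ s in -a..a, exp (φ s * I) = 2 * (∫ s in 0..a, exp (φ s * I)).re := by
  have hint : ∀ b c : ℝ, IntervalIntegrable (fun s => exp (φ s * I)) volume b c := fun b c =>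
    (by fun_prop : Continuous fun s => exp (φ s * I)).intervalIntegrable b c
  rw [← integral_add_adjacent_intervals (hint (-a) 0) (hint 0 a), ← neg_zero,
    ← intervalIntegral.integral_comp_neg, neg_zero]
  simp only [hodd]
  rw [integral_exp_neg_mul_I, add_comm, add_conj]
  push_cast; ring

theorem abs_besselJ_le_one (n : ℤ) (x : ℝ) : |besselJ n x| ≤ 1 := by
  have hnorm : ‖∫ s in -Real.pi..Real.pi, exp (I * (n * s + x * Real.sin s))‖ ≤ 2 * Real.pi := by
    refine (intervalIntegral.norm_integral_le_of_norm_le_const (C := 1) fun s _ => ?_).trans_eq ?_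
    · rw [mul_comm, ← ofReal_intCast, ← ofReal_mul, ← ofReal_mul, ← ofReal_add,
        norm_exp_ofReal_mul_I]
    · rw [one_mul, abs_of_pos (by linarith [Real.pi_pos])]; ring
  rw [besselJ, abs_mul, abs_of_pos (by positivity)]
  calc 1 / (2 * Real.pi) * |(∫ s in -Real.pi..Real.pi, exp (I * (n * s + x * Real.sin s))).re|
      ≤ 1 / (2 * Real.pi) * (2 * Real.pi) := by gcongr; exact (abs_re_le_norm _).trans hnorm
    _ = 1 := by field_simp

theorem besselJ_one_eq (x : ℝ) :
    besselJ 1 x = (∫ s in 0..Real.pi, exp (↑(s + x * Real.sin s) * I)).re / Real.pi := by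
  have hodd := integral_exp_mul_I_eq_two_mul_re_of_odd (φ := fun s => s + x * Real.sin s)
    (by fun_prop) (fun s => by rw [Real.sin_neg]; ring) Real.pi
  have hcongr : (fun s : ℝ => exp (I * (((1 : ℤ) : ℂ) * s + x * Real.sin s)))
      = fun s => exp (↑(s + x * Real.sin s) * I) := by
    ext s; push_cast; ring_nf
  rw [besselJ, hcongr, hodd, ← ofReal_ofNat, ← ofReal_mul, ofReal_re]
  ring

theorem abs_besselJ_one_le (x : ℝ) :
    |besselJ 1 x| ≤ ‖∫ s in 0..Real.pi, exp (↑(s + x * Real.sin s) * I)‖ / Real.pi := by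
  rw [besselJ_one_eq, abs_div, abs_of_pos Real.pi_pos]
  gcongr
  exact abs_re_le_norm _

theorem two_mul_sqrt_le_mul_sin_pi_div_sqrt {x : ℝ} (hx : 4 ≤ x) :
    2 * √x ≤ x * Real.sin (Real.pi / √x) := by
  have hy : 2 ≤ √x := Real.le_sqrt_of_sq_le (by linarith)
  have hjordan := Real.mul_le_sin (x := Real.pi / √x) (by positivity)
    (div_le_div_of_nonneg_left Real.pi_pos.le (by norm_num) hy)
  calc 2 * √x = x * (2 / Real.pi * (Real.pi / √x)) := by
        field_simp; rw [Real.sq_sqrt (by linarith)]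
    _ ≤ x * Real.sin (Real.pi / √x) := by gcongr

theorem norm_integral_exp_mul_I_add_mul_sin_le {x : ℝ} (hx : 4 ≤ x) :
    ‖∫ s in 0..Real.pi, exp (↑(s + x * Real.sin s) * I)‖ ≤ (6 + 2 * Real.pi) / √x := by
  have hy : 2 ≤ √x := Real.le_sqrt_of_sq_le (by linarith)
  have hsin := two_mul_sqrt_le_mul_sin_pi_div_sqrt hx
  set δ := Real.pi / √x
  have hδ_pos : 0 < δ := by positivity
  have hδ_le : δ ≤ Real.pi / 2 := div_le_div_of_nonneg_left Real.pi_pos.le (by norm_num) hy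
  set p := Real.pi / 2 - δ with hp_def
  set q := δ + Real.pi / 2 with hq_def
  have hp : 0 ≤ p := by linarith
  have hpq : p ≤ q := by linarith
  have hq : q ≤ Real.pi := by linarith
  have hφ : ∀ s, HasDerivAt (fun s => s + x * Real.sin s) (1 + x * Real.cos s) s := fun s =>
    (hasDerivAt_id s).add ((Real.hasDerivAt_sin s).const_mul x)
  have hφ' : ∀ s, HasDerivAt (fun s => 1 + x * Real.cos s) (-(x * Real.sin s)) s := fun s => by
    simpa using ((Real.hasDerivAt_cos s).const_mul x).const_add 1
  have hφ'' : ContinuousOn (fun s => -(x * Real.sin s)) (Icc 0 Real.pi) := by fun_prop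
  have hconcave : ∀ s ∈ Icc 0 Real.pi, -(x * Real.sin s) ≤ 0 := fun s hs =>
    neg_nonpos.2 (mul_nonneg (by linarith) (Real.sin_nonneg_of_nonneg_of_le_pi hs.1 hs.2))
  have hcont : Continuous fun s => exp (↑(s + x * Real.sin s) * I) := by fun_prop
  have hint := hcont.intervalIntegrable (μ := volume)
  have hleft : ‖∫ s in 0..p, exp (↑(s + x * Real.sin s) * I)‖ ≤ 3 / √x := by
    refine norm_integral_exp_mul_I_le_of_le_deriv (by linarith) (by positivity) (fun s _ => hφ s)
      (fun s _ => hφ' s) (hφ''.mono (Icc_subset_Icc le_rfl (by linarith)))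
      (Or.inr fun s hs => hconcave s ⟨hs.1, by linarith [hs.2]⟩) fun s hs => ?_
    have := Real.cos_le_cos_of_nonneg_of_le_pi hs.1 (by linarith) hs.2
    rw [Real.cos_pi_div_two_sub] at this
    nlinarith
  have hright : ‖∫ s in q..Real.pi, exp (↑(s + x * Real.sin s) * I)‖ ≤ 3 / √x := by
    refine norm_integral_exp_mul_I_le_of_deriv_le_neg (by linarith) (by positivity)
      (fun s _ => hφ s) (fun s _ => hφ' s) (hφ''.mono (Icc_subset_Icc (by linarith) le_rfl))
      (Or.inr fun s hs => hconcave s ⟨by linarith [hs.1], hs.2⟩) fun s hs => ?_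
    have := Real.cos_le_cos_of_nonneg_of_le_pi (by linarith) hs.2 hs.1
    rw [Real.cos_add_pi_div_two] at this
    nlinarith
  have hmiddle : ‖∫ s in p..q, exp (↑(s + x * Real.sin s) * I)‖ ≤ 2 * Real.pi / √x := by
    refine (intervalIntegral.norm_integral_le_of_norm_le_const (C := 1)
      fun s _ => (norm_exp_ofReal_mul_I _).le).trans_eq ?_
    rw [one_mul, abs_of_nonneg (by linarith)]
    ring
  rw [← integral_add_adjacent_intervals (hint 0 p) (hint p Real.pi),
    ← integral_add_adjacent_intervals (hint p q) (hint q Real.pi)]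
  calc _ ≤ 3 / √x + (2 * Real.pi / √x + 3 / √x) := by
        grw [norm_add_le, norm_add_le, hleft, hmiddle, hright]
    _ = (6 + 2 * Real.pi) / √x := by ring

theorem abs_besselJ_one_le_div_sqrt {x : ℝ} (hx : 0 < x) : |besselJ 1 x| ≤ 4 / √x := by
  rcases le_or_gt 4 x with hx4 | hx4
  · calc |besselJ 1 x| ≤ (6 + 2 * Real.pi) / √x / Real.pi := by
          grw [abs_besselJ_one_le, norm_integral_exp_mul_I_add_mul_sin_le hx4]
      _ = (6 / Real.pi + 2) / √x := by field_simp
      _ ≤ 4 / √x := by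
          have : 6 / Real.pi ≤ 2 := by rw [div_le_iff₀ Real.pi_pos]; linarith [Real.pi_gt_three]
          gcongr
          linarith
  · have hy : √x < 2 := (Real.sqrt_lt' two_pos).2 (by linarith)
    refine (abs_besselJ_le_one 1 x).trans ?_
    rw [le_div_iff₀ (Real.sqrt_pos.2 hx)]
    linarith

theorem SB_le_rpow {r t : ℝ} (hr : 0 ≤ r) (hrt : r < t) :
    SB r t ≤ (t ^ 2 - r ^ 2) ^ (-(3 / 4 : ℝ)) := by
  have hw : 0 < t ^ 2 - r ^ 2 := by nlinarith
  set z := √(t ^ 2 - r ^ 2) with hz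
  have hz_pos : 0 < z := Real.sqrt_pos.2 hw
  have hpow : (t ^ 2 - r ^ 2) ^ (-(3 / 4 : ℝ)) = (√z * z)⁻¹ := by
    rw [Real.rpow_neg hw.le, hz, Real.sqrt_eq_rpow, Real.sqrt_eq_rpow, ← Real.rpow_mul hw.le,
      ← Real.rpow_add hw]
    norm_num
  rw [SB, if_pos hrt.le, if_neg hrt.ne', ← hz, hpow]
  calc 1 / (4 * Real.pi) * (besselJ 1 z / z) ≤ 1 / (4 * Real.pi) * (4 / √z / z) := by
        gcongr; exact (le_abs_self _).trans (abs_besselJ_one_le_div_sqrt hz_pos)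
    _ = (√z * z)⁻¹ / Real.pi := by field_simp
    _ ≤ (√z * z)⁻¹ := div_le_self (by positivity) (by linarith [Real.pi_gt_three])

theorem setOf_lt_SB_subset_Icc {r lam : ℝ} (hr : 0 < r) (hlam : 0 < lam) :
    {t | lam < SB r t} ⊆ Icc r (r + lam ^ (-(4 / 3 : ℝ)) / (2 * r)) := by
  intro t (ht : lam < SB r t)
  have hrt : r ≤ t := by
    by_contra! h
    simp only [SB, if_neg h.not_ge, mul_zero] at ht
    linarith
  refine ⟨hrt, ?_⟩
  rcases hrt.eq_or_lt with rfl | hrt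
  · have : 0 < lam ^ (-(4 / 3 : ℝ)) / (2 * r) := by positivity
    linarith
  have hw : 0 < t ^ 2 - r ^ 2 := by nlinarith
  have hlevel : t ^ 2 - r ^ 2 < lam ^ (-(4 / 3 : ℝ)) := by
    have := Real.rpow_lt_rpow_of_neg hlam (ht.trans_le (SB_le_rpow hr.le hrt))
      (by norm_num : -(4 / 3 : ℝ) < 0)
    rwa [← Real.rpow_mul hw.le, show -(3 / 4 : ℝ) * -(4 / 3) = 1 by norm_num,
      Real.rpow_one] at this
  rw [← sub_le_iff_le_add', le_div_iff₀ (by positivity)]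
  nlinarith

theorem mul_rpow_div_two_mul_le {r lam : ℝ} (hr : 0 < r) (hlam : 0 < lam) :
    lam * (lam ^ (-(4 / 3 : ℝ)) / (2 * r)) ^ (3 / 4 : ℝ) ≤ r ^ (-(3 : ℝ) / 4) := by
  rw [Real.div_rpow (by positivity) (by positivity), ← Real.rpow_mul hlam.le,
    show -(4 / 3 : ℝ) * (3 / 4) = -1 by norm_num, Real.rpow_neg_one, neg_div, Real.rpow_neg hr.le,
    mul_div_assoc', mul_inv_cancel₀ hlam.ne', one_div]
  gcongr
  linarith

/-- There is an absolute constant `C > 0` such that for every `r > 0`, the weak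
`L^{4/3}` norm in time of `S_B` satisfies
`sup_{λ>0} λ |{t > 0 : S_B(r,t) > λ}|^{3/4} ≤ C r^{−3/4}`. -/
theorem SB_weak_L43_bound :
    ∃ C : ℝ, 0 < C ∧ ∀ r : ℝ, 0 < r → ∀ lam : ℝ, 0 < lam →
      ENNReal.ofReal lam *
        (MeasureTheory.volume {t : ℝ | 0 < t ∧ lam < SB r t}) ^ ((3 : ℝ) / 4) ≤
      ENNReal.ofReal (C * r ^ (-(3 : ℝ) / 4)) := by
  refine ⟨1, one_pos, fun r hr lam hlam => ?_⟩
  set L := lam ^ (-(4 / 3 : ℝ)) / (2 * r)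
  have hvol : volume {t : ℝ | 0 < t ∧ lam < SB r t} ≤ ENNReal.ofReal L :=
    calc volume {t : ℝ | 0 < t ∧ lam < SB r t} ≤ volume (Icc r (r + L)) :=
          measure_mono fun t ht => setOf_lt_SB_subset_Icc hr hlam ht.2
      _ = ENNReal.ofReal L := by rw [Real.volume_Icc, add_sub_cancel_left]
  calc ENNReal.ofReal lam * volume {t : ℝ | 0 < t ∧ lam < SB r t} ^ ((3 : ℝ) / 4)
      ≤ ENNReal.ofReal lam * ENNReal.ofReal L ^ ((3 : ℝ) / 4) := by gcongr
    _ = ENNReal.ofReal (lam * L ^ ((3 : ℝ) / 4)) := by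
        rw [ENNReal.ofReal_rpow_of_nonneg (by positivity) (by norm_num), ENNReal.ofReal_mul hlam.le]
    _ ≤ ENNReal.ofReal (1 * r ^ (-(3 : ℝ) / 4)) := by
        rw [one_mul]
        exact ENNReal.ofReal_le_ofReal (mul_rpow_div_two_mul_le hr hlam)
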